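/- Let $T$ be the dyadic shift and $I_0$ an odd dyadic interval with sibling $s I_0$. Then $h_{s I_0}$ vanishes on $I_0$, while $T^* h_{sI_0} = \mathrm{sgn}(sI_0, \hat I_0) h_{\hat I_0}$, which restricted to $I_0$ equals a nonzero constant. -/

import Mathlib

open MeasureTheory
open scoped Classical

/-- A dyadic interval `[k·2^(-n), (k+1)·2^(-n))` on the real line, encoded by its
scale `n` (so that `|I| = 2^(-n)`) and its position `k`. -/
structure DI where
  n : ℤ
  k : ℤ

namespace DI

/-- The underlying half-open interval of a dyadic interval. -/
noncomputable def set (I : DI) : Set ℝ :=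
  Set.Ico ((I.k : ℝ) * (2:ℝ) ^ (-I.n)) (((I.k : ℝ) + 1) * (2:ℝ) ^ (-I.n))

/-- The length `|I| = 2^(-n)` of a dyadic interval. -/
noncomputable def len (I : DI) : ℝ := (2:ℝ) ^ (-I.n)

/-- `I` is *even* when `|I| = 2^(-2k)` for an integer `k`. -/
def IsEven (I : DI) : Prop := Even I.n

/-- The dyadic parent `Î` of `I`. -/
def parent (I : DI) : DI := ⟨I.n - 1, Int.ediv I.k 2⟩

/-- The left (lower) half `I₋` of `I`. -/
def left (I : DI) : DI := ⟨I.n + 1, 2 * I.k⟩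

/-- The right (upper) half `I₊` of `I`. -/
def right (I : DI) : DI := ⟨I.n + 1, 2 * I.k + 1⟩

/-- The dyadic sibling of `I` (the other child of `Î`). -/
def sibling (I : DI) : DI := if I.k % 2 = 1 then ⟨I.n, I.k - 1⟩ else ⟨I.n, I.k + 1⟩

/-- `sgn (I, Î)`: equal to `+1` if `I = (Î)₊` (the right child) and `-1` if `I = (Î)₋`. -/
noncomputable def sgn (I : DI) : ℝ := if I.k % 2 = 1 then 1 else -1

/-- Containment of dyadic intervals. -/
def Sub (I J : DI) : Prop := I.set ⊆ J.set

end DI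

/-- The Haar function `h_I = |I|^{-1/2} (𝟏_{I₊} - 𝟏_{I₋})`. -/
noncomputable def haar (I : DI) : ℝ → ℝ := fun x =>
  Real.sqrt ((2:ℝ) ^ I.n) *
    (if x ∈ DI.set (DI.right I) then 1 else if x ∈ DI.set (DI.left I) then -1 else 0)

/-- The Haar coefficient `(f, h_I)`. -/
noncomputable def hcoef (f : ℝ → ℝ) (I : DI) : ℝ := ∫ x, f x * haar I x

/-- The average `⟨f⟩_I = (f, 𝟏_I/|I|)`. -/
noncomputable def avg (f : ℝ → ℝ) (I : DI) : ℝ := (∫ x in DI.set I, f x) / DI.len I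

/-- The normalized indicator `𝟏̃_I = 𝟏_I/|I|`. -/
noncomputable def nind (I : DI) : ℝ → ℝ := fun x => if x ∈ DI.set I then 1 / DI.len I else 0

/-- The dyadic shift `T`, with `T h_I = h_{I₊} - h_{I₋}` for `I` even and `T h_I = 0`
for `I` odd. -/
noncomputable def shift (f : ℝ → ℝ) : ℝ → ℝ := fun x =>
  ∑' I : DI, if DI.IsEven I then hcoef f I * (haar (DI.right I) x - haar (DI.left I) x) else 0

/-- The adjoint dyadic shift `T*`, with `T* h_I = sgn(I, Î) h_{Î}` for `I` odd and
`T* h_I = 0` for `I` even. -/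
noncomputable def shiftAdj (f : ℝ → ℝ) : ℝ → ℝ := fun x =>
  ∑' I : DI, if DI.IsEven I then 0 else hcoef f I * DI.sgn I * haar (DI.parent I) x

/-- The paraproduct `D(b, f) = ∑_I ⟨b⟩_I (f, h_I) h_I`. -/
noncomputable def Dpara (b f : ℝ → ℝ) : ℝ → ℝ := fun x =>
  ∑' I : DI, avg b I * hcoef f I * haar I x

/-- The dyadic shift `T₁` acting in the first variable. -/
noncomputable def shift1 (F : ℝ × ℝ → ℝ) : ℝ × ℝ → ℝ := fun p => shift (fun x => F (x, p.2)) p.1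

/-- The dyadic shift `T₂` acting in the second variable. -/
noncomputable def shift2 (F : ℝ × ℝ → ℝ) : ℝ × ℝ → ℝ := fun p => shift (fun y => F (p.1, y)) p.2

/-- The adjoint shift `T₁*` acting in the first variable. -/
noncomputable def shift1Adj (F : ℝ × ℝ → ℝ) : ℝ × ℝ → ℝ := fun p =>
  shiftAdj (fun x => F (x, p.2)) p.1

/-- The adjoint shift `T₂*` acting in the second variable. -/
noncomputable def shift2Adj (F : ℝ × ℝ → ℝ) : ℝ × ℝ → ℝ := fun p =>
  shiftAdj (fun y => F (p.1, y)) p.2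

/-- The repeated commutator `𝒯^b = [T₂,[T₁,b]] = T₂T₁b· − T₂ b T₁ − T₁ b T₂ + b T₁T₂`. -/
noncomputable def repComm (b F : ℝ × ℝ → ℝ) : ℝ × ℝ → ℝ := fun p =>
  shift2 (shift1 (fun q => b q * F q)) p - shift2 (fun q => b q * shift1 F q) p
    - shift1 (fun q => b q * shift2 F q) p + b p * shift1 (shift2 F) p

/-- The repeated commutator with the adjoint shifts, `𝒯^b_* = [T₂*,[T₁*,b]]`. -/
noncomputable def repCommAdj (b F : ℝ × ℝ → ℝ) : ℝ × ℝ → ℝ := fun p =>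
  shift2Adj (shift1Adj (fun q => b q * F q)) p - shift2Adj (fun q => b q * shift1Adj F q) p
    - shift1Adj (fun q => b q * shift2Adj F q) p + b p * shift1Adj (shift2Adj F) p

/-- The bi-parameter Haar coefficient `(b, h_I ⊗ h_J)`. -/
noncomputable def hcoef2 (b : ℝ × ℝ → ℝ) (I J : DI) : ℝ :=
  ∫ p : ℝ × ℝ, b p * haar I p.1 * haar J p.2

/-- A dyadic rectangle `R = I × J` as a subset of the plane. -/
noncomputable def dRect (R : DI × DI) : Set (ℝ × ℝ) := DI.set R.1 ×ˢ DI.set R.2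

/-- The strong dyadic maximal function `M_s^d`. -/
noncomputable def strongMax (f : ℝ × ℝ → ℝ) (p : ℝ × ℝ) : ℝ :=
  sSup {r : ℝ | ∃ R : DI × DI, p ∈ dRect R ∧
    r = (∫ q in dRect R, |f q|) / (DI.len R.1 * DI.len R.2)}

/-- The enlargement `U = {M_s^d 𝟏_{U₀} ≥ 1/16}` of a set `U₀`. -/
noncomputable def enlarge (U0 : Set (ℝ × ℝ)) : Set (ℝ × ℝ) :=
  {p | (1:ℝ)/16 ≤ strongMax (U0.indicator fun _ => (1:ℝ)) p}

namespace UncleAux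

open MeasureTheory

lemma twopow_pos (n : ℤ) : (0:ℝ) < (2:ℝ) ^ n := zpow_pos (by norm_num) n

lemma measurableSet_set (I : DI) : MeasurableSet I.set := measurableSet_Ico

lemma volume_set (I : DI) : volume I.set = ENNReal.ofReal ((2:ℝ) ^ (-I.n)) := by
  rw [DI.set, Real.volume_Ico]
  congr 1; ring

lemma disjoint_same (n k k' : ℤ) (h : k ≠ k') :
    Disjoint (DI.set ⟨n, k⟩) (DI.set ⟨n, k'⟩) := by
  rw [Set.disjoint_left]
  intro x hx hx'
  simp only [DI.set, Set.mem_Ico] at hx hx'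
  have hp := twopow_pos (-n)
  rcases lt_or_gt_of_ne h with hlt | hlt
  · have : ((k:ℝ) + 1) ≤ (k':ℝ) := by exact_mod_cast hlt
    nlinarith [hx.1, hx.2, hx'.1, hx'.2]
  · have : ((k':ℝ) + 1) ≤ (k:ℝ) := by exact_mod_cast hlt
    nlinarith [hx.1, hx.2, hx'.1, hx'.2]

lemma subset_of_inter {A B : DI} (hn : B.n ≤ A.n) (x : ℝ)
    (hA : x ∈ A.set) (hB : x ∈ B.set) : A.set ⊆ B.set := by
  obtain ⟨m, k⟩ := A
  obtain ⟨n, j⟩ := B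
  simp only [DI.set, Set.mem_Ico] at hA hB ⊢
  simp only at hn
  set d : ℤ := 2 ^ (m - n).toNat with hd
  have hde : (2:ℝ) ^ (m - n) = (d:ℝ) := by
    rw [hd]; push_cast
    rw [← zpow_natCast, Int.toNat_of_nonneg (by omega)]
  have h2m : (0:ℝ) < (2:ℝ) ^ (-m) := twopow_pos _
  have key : (2:ℝ) ^ (-n) = (d:ℝ) * (2:ℝ) ^ (-m) := by
    rw [← hde, ← zpow_add₀ (by norm_num : (2:ℝ) ≠ 0)]
    congr 1; ring
  have h1 : (j:ℝ) * d ≤ (k:ℝ) := by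
    have hlt : ((j:ℝ) * d) * (2:ℝ) ^ (-m) < ((k:ℝ) + 1) * (2:ℝ) ^ (-m) := by
      have := lt_of_le_of_lt hB.1 hA.2
      rw [key] at this; linarith [this]
    have hlt2 : (j:ℝ) * d < (k:ℝ) + 1 := lt_of_mul_lt_mul_right hlt h2m.le
    have : j * d < k + 1 := by exact_mod_cast hlt2
    exact_mod_cast (by omega : j * d ≤ k)
  have h2 : ((k:ℝ) + 1) ≤ ((j:ℝ) + 1) * d := by
    have hlt : (k:ℝ) * (2:ℝ) ^ (-m) < (((j:ℝ) + 1) * d) * (2:ℝ) ^ (-m) := by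
      have := lt_of_le_of_lt hA.1 hB.2
      rw [key] at this; linarith [this]
    have hlt2 : (k:ℝ) < ((j:ℝ) + 1) * d := lt_of_mul_lt_mul_right hlt h2m.le
    have : k < (j + 1) * d := by exact_mod_cast hlt2
    exact_mod_cast (by omega : k + 1 ≤ (j + 1) * d)
  intro y hy
  constructor
  · calc (j:ℝ) * 2 ^ (-n) = ((j:ℝ) * d) * 2 ^ (-m) := by rw [key]; ring
    _ ≤ (k:ℝ) * 2 ^ (-m) := by nlinarith
    _ ≤ y := hy.1
  · calc y < ((k:ℝ) + 1) * 2 ^ (-m) := hy.2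
    _ ≤ (((j:ℝ) + 1) * d) * 2 ^ (-m) := by nlinarith
    _ = ((j:ℝ) + 1) * 2 ^ (-n) := by rw [key]; ring

lemma set_union (I : DI) : (DI.left I).set ∪ (DI.right I).set = I.set := by
  have e : (2:ℝ) ^ (-(I.n + 1)) * 2 = (2:ℝ) ^ (-I.n) := by
    rw [← zpow_add_one₀ (by norm_num : (2:ℝ) ≠ 0)]
    congr 1; ring
  have h1 : ((2:ℝ) * I.k) * 2 ^ (-(I.n + 1)) = (I.k : ℝ) * 2 ^ (-I.n) := by
    linear_combination (I.k : ℝ) * e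
  have h2 : ((2:ℝ) * I.k + 1 + 1) * 2 ^ (-(I.n + 1)) = ((I.k : ℝ) + 1) * 2 ^ (-I.n) := by
    linear_combination ((I.k : ℝ) + 1) * e
  simp only [DI.set, DI.left, DI.right]
  push_cast
  rw [Set.Ico_union_Ico_eq_Ico (by nlinarith [twopow_pos (-(I.n + 1))])
    (by nlinarith [twopow_pos (-(I.n + 1))]), h1, h2]

lemma disjoint_children (I : DI) : Disjoint (DI.left I).set (DI.right I).set :=
  disjoint_same (I.n + 1) (2 * I.k) (2 * I.k + 1) (by omega)

lemma left_subset (I : DI) : (DI.left I).set ⊆ I.set := by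
  intro x hx; rw [← set_union I]; exact Set.mem_union_left _ hx

lemma right_subset (I : DI) : (DI.right I).set ⊆ I.set := by
  intro x hx; rw [← set_union I]; exact Set.mem_union_right _ hx

lemma haar_eq_zero {I : DI} {x : ℝ} (h : x ∉ I.set) : haar I x = 0 := by
  simp only [haar]
  rw [if_neg (fun h' => h (right_subset I h')), if_neg (fun h' => h (left_subset I h')),
    mul_zero]

lemma haar_right {I : DI} {x : ℝ} (h : x ∈ (DI.right I).set) :
    haar I x = Real.sqrt ((2:ℝ) ^ I.n) := by
  simp only [haar]; rw [if_pos h, mul_one]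

lemma haar_left {I : DI} {x : ℝ} (h : x ∈ (DI.left I).set) :
    haar I x = -Real.sqrt ((2:ℝ) ^ I.n) := by
  have hr : x ∉ (DI.right I).set := fun h' =>
    (Set.disjoint_left.1 (disjoint_children I)) h h'
  simp only [haar]; rw [if_neg hr, if_pos h]; ring

lemma integrable_ind (I : DI) (c : ℝ) :
    Integrable (I.set.indicator fun _ => c) := by
  rw [integrable_indicator_iff (measurableSet_set I)]
  refine integrableOn_const ?_
  rw [volume_set]; exact ENNReal.ofReal_ne_top

lemma integral_ind (I : DI) (c : ℝ) :
    ∫ x, I.set.indicator (fun _ => c) x = c * (2:ℝ) ^ (-I.n) := by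
  rw [MeasureTheory.integral_indicator (measurableSet_set I), setIntegral_const, measureReal_def, volume_set,
    ENNReal.toReal_ofReal (le_of_lt (twopow_pos _)), smul_eq_mul, mul_comm]

lemma haar_eq (I : DI) : haar I = fun x =>
    (DI.right I).set.indicator (fun _ => Real.sqrt ((2:ℝ) ^ I.n)) x
      - (DI.left I).set.indicator (fun _ => Real.sqrt ((2:ℝ) ^ I.n)) x := by
  funext x
  by_cases hr : x ∈ (DI.right I).set
  · have hl : x ∉ (DI.left I).set := fun h' =>
      (Set.disjoint_right.1 (disjoint_children I)) hr h'
    rw [haar_right hr, Set.indicator_of_mem hr, Set.indicator_of_notMem hl, sub_zero]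
  · by_cases hl : x ∈ (DI.left I).set
    · rw [haar_left hl, Set.indicator_of_notMem hr, Set.indicator_of_mem hl, zero_sub]
    · have : x ∉ I.set := by
        rw [← set_union]; rintro (h | h) <;> [exact hl h; exact hr h]
      rw [haar_eq_zero this, Set.indicator_of_notMem hr, Set.indicator_of_notMem hl,
        sub_zero]

lemma integral_haar (I : DI) : ∫ x, haar I x = 0 := by
  rw [haar_eq, integral_sub (integrable_ind _ _) (integrable_ind _ _),
    integral_ind, integral_ind]
  simp only [DI.right, DI.left]
  ring

lemma hcoef_self (J : DI) : hcoef (haar J) J = 1 := by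
  have hnn : (0:ℝ) ≤ (2:ℝ) ^ J.n := le_of_lt (twopow_pos _)
  rw [hcoef]
  have e : (fun x => haar J x * haar J x) = fun x =>
      (DI.right J).set.indicator (fun _ => (2:ℝ) ^ J.n) x
        + (DI.left J).set.indicator (fun _ => (2:ℝ) ^ J.n) x := by
    funext x
    by_cases hr : x ∈ (DI.right J).set
    · have hl : x ∉ (DI.left J).set := fun h' =>
        (Set.disjoint_right.1 (disjoint_children J)) hr h'
      rw [haar_right hr, Set.indicator_of_mem hr, Set.indicator_of_notMem hl, add_zero,
        Real.mul_self_sqrt hnn]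
    · by_cases hl : x ∈ (DI.left J).set
      · rw [haar_left hl, Set.indicator_of_notMem hr, Set.indicator_of_mem hl, zero_add,
          neg_mul_neg, Real.mul_self_sqrt hnn]
      · have : x ∉ J.set := by
          rw [← set_union]; rintro (h | h) <;> [exact hl h; exact hr h]
        rw [haar_eq_zero this, Set.indicator_of_notMem hr, Set.indicator_of_notMem hl,
          add_zero, mul_zero]
  rw [e, integral_add (integrable_ind _ _) (integrable_ind _ _), integral_ind, integral_ind]
  simp only [DI.right, DI.left]
  have e2 : (2:ℝ) ^ (-(J.n + 1)) * 2 = (2:ℝ) ^ (-J.n) := by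
    rw [← zpow_add_one₀ (by norm_num : (2:ℝ) ≠ 0)]
    congr 1; ring
  have e3 : (2:ℝ) ^ J.n * (2:ℝ) ^ (-J.n) = 1 := by
    rw [← zpow_add₀ (by norm_num : (2:ℝ) ≠ 0)]; simp
  linear_combination ((2:ℝ) ^ J.n) * e2 + e3

lemma hcoef_of_disjoint {I J : DI} (h : Disjoint I.set J.set) : hcoef (haar J) I = 0 := by
  rw [hcoef]
  have e : (fun x => haar J x * haar I x) = fun _ => (0:ℝ) := by
    funext x
    by_cases hx : x ∈ J.set
    · rw [haar_eq_zero (fun hI => (Set.disjoint_right.1 h) hx hI), mul_zero]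
    · rw [haar_eq_zero hx, zero_mul]
  rw [e, integral_zero]

lemma hcoef_of_constOnJ {I J : DI} {c : ℝ} (h : ∀ x ∈ J.set, haar I x = c) :
    hcoef (haar J) I = 0 := by
  rw [hcoef]
  have e : (fun x => haar J x * haar I x) = fun x => haar J x * c := by
    funext x
    by_cases hx : x ∈ J.set
    · rw [h x hx]
    · rw [haar_eq_zero hx, zero_mul, zero_mul]
  rw [e, integral_mul_const, integral_haar, zero_mul]

lemma hcoef_of_constOnI {I J : DI} {c : ℝ} (h : ∀ x ∈ I.set, haar J x = c) :
    hcoef (haar J) I = 0 := by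
  rw [hcoef]
  have e : (fun x => haar J x * haar I x) = fun x => c * haar I x := by
    funext x
    by_cases hx : x ∈ I.set
    · rw [h x hx]
    · rw [haar_eq_zero hx, mul_zero, mul_zero]
  rw [e, MeasureTheory.integral_const_mul, integral_haar, mul_zero]

lemma hcoef_orth {I J : DI} (h : I ≠ J) : hcoef (haar J) I = 0 := by
  rcases lt_trichotomy I.n J.n with hn | hn | hn
  · -- I coarser: haar I constant on J.set, or disjoint
    by_cases hd : Disjoint I.set J.set
    · exact hcoef_of_disjoint hd
    · obtain ⟨x, hxI, hxJ⟩ := Set.not_disjoint_iff.1 hd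
      have hx' : x ∈ (DI.left I).set ∪ (DI.right I).set := by rw [set_union]; exact hxI
      rcases hx' with hx' | hx'
      · have hsub : J.set ⊆ (DI.left I).set :=
          subset_of_inter (by simp only [DI.left]; omega) x hxJ hx'
        exact hcoef_of_constOnJ (fun y hy => haar_left (hsub hy))
      · have hsub : J.set ⊆ (DI.right I).set :=
          subset_of_inter (by simp only [DI.right]; omega) x hxJ hx'
        exact hcoef_of_constOnJ (fun y hy => haar_right (hsub hy))
  · -- same scale, different position
    obtain ⟨nI, kI⟩ := I
    obtain ⟨nJ, kJ⟩ := J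
    simp only at hn
    subst hn
    have hk : kI ≠ kJ := fun hk => h (by rw [hk])
    exact hcoef_of_disjoint (disjoint_same _ _ _ hk)
  · -- I finer: haar J constant on I.set, or disjoint
    by_cases hd : Disjoint I.set J.set
    · exact hcoef_of_disjoint hd
    · obtain ⟨x, hxI, hxJ⟩ := Set.not_disjoint_iff.1 hd
      have hx' : x ∈ (DI.left J).set ∪ (DI.right J).set := by rw [set_union]; exact hxJ
      rcases hx' with hx' | hx'
      · have hsub : I.set ⊆ (DI.left J).set :=
          subset_of_inter (by simp only [DI.left]; omega) x hxI hx'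
        exact hcoef_of_constOnI (fun y hy => haar_left (hsub hy))
      · have hsub : I.set ⊆ (DI.right J).set :=
          subset_of_inter (by simp only [DI.right]; omega) x hxI hx'
        exact hcoef_of_constOnI (fun y hy => haar_right (hsub hy))

lemma shiftAdj_haar (J : DI) (hJ : ¬ DI.IsEven J) :
    shiftAdj (haar J) = fun x => DI.sgn J * haar (DI.parent J) x := by
  funext x
  simp only [shiftAdj]
  have key : ∀ I : DI, I ≠ J →
      (if DI.IsEven I then 0
        else hcoef (haar J) I * DI.sgn I * haar (DI.parent I) x) = 0 := by
    intro I hI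
    by_cases he : DI.IsEven I
    · rw [if_pos he]
    · rw [if_neg he, hcoef_orth hI, zero_mul, zero_mul]
  rw [tsum_eq_single J key, if_neg hJ, hcoef_self, one_mul]

lemma ediv_eq (a b : ℤ) : Int.ediv a b = a / b := rfl

lemma sibling_n (I : DI) : (DI.sibling I).n = I.n := by
  rw [DI.sibling]; split_ifs <;> rfl

lemma parent_sibling (I : DI) : DI.parent (DI.sibling I) = DI.parent I := by
  rw [DI.sibling]
  split_ifs with hk <;> simp only [DI.parent, ediv_eq] <;> congr 1 <;> omega

lemma haar_parent_on (I : DI) {x : ℝ} (hx : x ∈ I.set) :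
    haar (DI.parent I) x = DI.sgn I * Real.sqrt ((2:ℝ) ^ (I.n - 1)) := by
  obtain ⟨n, k⟩ := I
  simp only [DI.sgn]
  by_cases hk : k % 2 = 1
  · have hr : DI.right (DI.parent ⟨n, k⟩) = ⟨n, k⟩ := by
      simp only [DI.right, DI.parent, ediv_eq]
      congr 1 <;> omega
    rw [if_pos hk, haar_right (by rw [hr]; exact hx)]
    simp only [DI.parent, one_mul]
  · have hl : DI.left (DI.parent ⟨n, k⟩) = ⟨n, k⟩ := by
      simp only [DI.left, DI.parent, ediv_eq]
      congr 1 <;> omega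
    rw [if_neg hk, haar_left (by rw [hl]; exact hx)]
    simp only [DI.parent]
    ring

end UncleAux

/-- **The uncle test function:** for odd `I₀` with sibling `sI₀`, the Haar function
`h_{sI₀}` vanishes on `I₀`, while `T* h_{sI₀} = sgn(sI₀, Î₀) h_{Î₀}`, which restricted
to `I₀` is a nonzero constant. -/
theorem stmt12 (I0 : DI) (hodd : ¬ DI.IsEven I0) :
    (∀ x ∈ DI.set I0, haar (DI.sibling I0) x = 0) ∧
    (shiftAdj (haar (DI.sibling I0)) =
      fun x => DI.sgn (DI.sibling I0) * haar (DI.parent I0) x) ∧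
    ∃ cst : ℝ, cst ≠ 0 ∧ ∀ x ∈ DI.set I0, shiftAdj (haar (DI.sibling I0)) x = cst := by
  have hsibn : ¬ DI.IsEven (DI.sibling I0) := by
    rw [DI.IsEven, UncleAux.sibling_n]; exact hodd
  have hdisj : Disjoint (DI.set I0) (DI.set (DI.sibling I0)) := by
    obtain ⟨n, k⟩ := I0
    simp only [DI.sibling]
    split_ifs with hk
    · exact UncleAux.disjoint_same n k (k - 1) (by omega)
    · exact UncleAux.disjoint_same n k (k + 1) (by omega)
  refine ⟨?_, ?_, ?_⟩
  · intro x hx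
    exact UncleAux.haar_eq_zero (fun hx' => (Set.disjoint_left.1 hdisj) hx hx')
  · rw [UncleAux.shiftAdj_haar _ hsibn, UncleAux.parent_sibling]
  · refine ⟨DI.sgn (DI.sibling I0) * (DI.sgn I0 * Real.sqrt ((2:ℝ) ^ (I0.n - 1))), ?_, ?_⟩
    · have hs : Real.sqrt ((2:ℝ) ^ (I0.n - 1)) ≠ 0 :=
        ne_of_gt (Real.sqrt_pos.2 (UncleAux.twopow_pos _))
      have h1 : DI.sgn (DI.sibling I0) ≠ 0 := by
        rw [DI.sgn]; split_ifs <;> norm_num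
      have h2 : DI.sgn I0 ≠ 0 := by
        rw [DI.sgn]; split_ifs <;> norm_num
      exact mul_ne_zero h1 (mul_ne_zero h2 hs)
    · intro x hx
      simp only [UncleAux.shiftAdj_haar _ hsibn, UncleAux.parent_sibling,
        UncleAux.haar_parent_on I0 hx]
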